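/- Assume the Rotation Lemma: for every tree language L recognized by a deterministic tree-walking automaton over an alphabet containing a binary letter a and a nullary letter c, there exists a 2-ary term t over {a,c} with t(t(*,*),*) L-equivalent to t(*,t(*,*)); assume also every such L is a regular tree language. Then: if the Kopczyński obfuscations kop(G) and kop(H) of two context-free grammars G, H with terminals Γ can be separated by a language recognized by a deterministic tree-walking automaton, the word languages L(G) and L(H) can be separated by a regular word language. -/

import Mathlib

/-!
Fix a separator `L` recognised by a tree-walking automaton, and let `t` be the term given by the
Rotation Lemma. `L`-equivalence is a congruence for pairing by `t`, so the rotation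
`t(t(X, Y), Z) ~ t(X, t(Y, Z))` holds for arbitrary open `X, Y, Z`, and by induction every term of
`t*` is `L`-equivalent to the left comb with the same number of ports. Using `t` at every
nonterminal turns a derivation `d` into a tree of `kop(G)` of the form `s(a₁, …, aₙ)` with
`s ∈ t*` and `a₁ ⋯ aₙ` the yield of `d`; hence that tree lies in `L` iff `comb_t(a₁, …, aₙ)`
does. Finally `L` is regular, and running a bottom-up automaton for `L` along the comb is a DFA
for `K = {w | comb_t(w) ∈ L}`, which therefore separates `L(G)` from `L(H)`.
-/

inductive Term (σ : Type) : Type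
  | port : Term σ
  | node : σ → List (Term σ) → Term σ

namespace Term

variable {σ : Type}

def ports : Term σ → ℕ
  | .port => 1
  | .node _ ts => (ts.attach.map fun x => ports x.1).sum
decreasing_by
  simp_wf
  have := List.sizeOf_lt_of_mem x.2
  omega

def size : Term σ → ℕ
  | .port => 1
  | .node _ ts => 1 + (ts.attach.map fun x => size x.1).sum
decreasing_by
  simp_wf
  have := List.sizeOf_lt_of_mem x.2
  omega

def WF (ar : σ → ℕ) : Term σ → Prop
  | .port => True
  | .node a ts => ts.length = ar a ∧ ∀ t ∈ ts.attach, WF ar t.1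
decreasing_by
  simp_wf
  have := List.sizeOf_lt_of_mem t.2
  omega

mutual
def subst1 : Term σ → List (Term σ) → Term σ × List (Term σ)
  | .port, l => (l.headD .port, l.tail)
  | .node a ts, l => let p := substL ts l; (.node a p.1, p.2)
def substL : List (Term σ) → List (Term σ) → List (Term σ) × List (Term σ)
  | [], l => ([], l)
  | t :: ts, l => let p := subst1 t l; let q := substL ts p.2; (p.1 :: q.1, q.2)
end

/-- Substitute the terms `l` for the ports of `t`, in left-to-right order. -/
def subst (t : Term σ) (l : List (Term σ)) : Term σ := (subst1 t l).1

def eval {Q : Type} (δ : σ → List Q → Q) (q0 : Q) : Term σ → Q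
  | .port => q0
  | .node a ts => δ a (ts.attach.map fun x => eval δ q0 x.1)
decreasing_by
  simp_wf
  have := List.sizeOf_lt_of_mem x.2
  omega

end Term

inductive TStar {σ : Type} (t : Term σ) : Term σ → Prop
  | base : TStar t Term.port
  | step {u v : Term σ} : TStar t u → TStar t v → TStar t (t.subst [u, v])

def LEquiv {σ : Type} (ar : σ → ℕ) (L : Set (Term σ)) (n : ℕ) (u u' : Term σ) : Prop :=
  u.ports = n ∧ u'.ports = n ∧
  ∀ s : Term σ, s.ports = 1 → s.WF ar →
    ∀ l : List (Term σ), l.length = n → (∀ x ∈ l, x.ports = 0 ∧ x.WF ar) →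
      (s.subst [u.subst l] ∈ L ↔ s.subst [u'.subst l] ∈ L)

def RegularTree {σ : Type} (ar : σ → ℕ) (L : Set (Term σ)) : Prop :=
  ∃ (Q : Type) (_ : Finite Q) (δ : σ → List Q → Q) (q0 : Q) (F : Set Q),
    L = {u | u.ports = 0 ∧ u.WF ar ∧ u.eval δ q0 ∈ F}

def RegularWord {Γ : Type} (K : Set (List Γ)) : Prop :=
  ∃ (Q : Type) (_ : Fintype Q) (M : DFA Γ Q), K = M.accepts

/-- A context-free grammar in Chomsky normal form: rules `A → B C` and `A → σ`. -/
structure CNF (Γ N : Type) where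
  start : N
  rule2 : N → N → N → Prop
  rule1 : N → Γ → Prop

/-- Derivation trees: internal nodes labeled by nonterminals, leaves by terminals. -/
inductive DTree (Γ N : Type) : Type
  | leaf : Γ → DTree Γ N
  | node : N → DTree Γ N → DTree Γ N → DTree Γ N

def DTree.yield {Γ N : Type} : DTree Γ N → List Γ
  | .leaf a => [a]
  | .node _ l r => l.yield ++ r.yield

/-- `IsDeriv G d A`: `d` is a derivation tree of `G` from nonterminal `A`. -/
def IsDeriv {Γ N : Type} (G : CNF Γ N) : DTree Γ N → N → Prop
  | .leaf a, A => G.rule1 A a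
  | .node B l r, A => B = A ∧ ∃ C D, G.rule2 A C D ∧ IsDeriv G l C ∧ IsDeriv G r D

/-- The word language generated by `G`. -/
def CNF.lang {Γ N : Type} (G : CNF Γ N) : Set (List Γ) :=
  {w | ∃ d : DTree Γ N, IsDeriv G d G.start ∧ d.yield = w}

/-- The ranked alphabet `Γ ∪ {a, c}`: `Sum.inr true` is the binary letter `a`,
`Sum.inr false` is the nullary letter `c`, and letters of `Γ` have arity 0. -/
abbrev KLetter (Γ : Type) := Γ ⊕ Bool

def arK {Γ : Type} : KLetter Γ → ℕ
  | .inr true => 2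
  | _ => 0

/-- All labels of the term are among `{a, c}`. -/
def OnlyAC {Γ : Type} : Term (KLetter Γ) → Prop
  | .port => True
  | .node x ts => (∃ b : Bool, x = .inr b) ∧ ∀ u ∈ ts.attach, OnlyAC u.1
decreasing_by
  simp_wf
  have := List.sizeOf_lt_of_mem u.2
  omega

def leafT {Γ : Type} (g : Γ) : Term (KLetter Γ) := .node (.inl g) []

/-- `KopD d u`: `u` is obtained from the derivation tree `d` by replacing each
nonterminal occurrence by some 2-ary term over `{a, c}`. -/
inductive KopD {Γ N : Type} : DTree Γ N → Term (KLetter Γ) → Prop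
  | leaf (g : Γ) : KopD (.leaf g) (leafT g)
  | node (A : N) (l r : DTree Γ N) (s u v : Term (KLetter Γ)) :
      s.ports = 2 → s.WF arK → OnlyAC s → KopD l u → KopD r v →
      KopD (.node A l r) (s.subst [u, v])

/-- The Kopczyński obfuscation of `G`. -/
def kopLang {Γ N : Type} (G : CNF Γ N) : Set (Term (KLetter Γ)) :=
  {u | ∃ d : DTree Γ N, IsDeriv G d G.start ∧ KopD d u}

/-- The left-to-right word of `Γ`-labeled leaves of a tree over `Γ ∪ {a,c}`. -/
def gyield {Γ : Type} : Term (KLetter Γ) → List Γ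
  | .port => []
  | .node (.inl g) _ => [g]
  | .node (.inr _) ts => (ts.attach.map fun x => gyield x.1).flatten
decreasing_by
  simp_wf
  have := List.sizeOf_lt_of_mem x.2
  omega


namespace Term

variable {σ : Type}

def sumPorts (l : List (Term σ)) : ℕ := (l.map ports).sum

@[simp] theorem sumPorts_nil : sumPorts ([] : List (Term σ)) = 0 := rfl

@[simp] theorem sumPorts_cons (t : Term σ) (l : List (Term σ)) :
    sumPorts (t :: l) = t.ports + sumPorts l := by
  simp [sumPorts]

theorem sumPorts_append (l₁ l₂ : List (Term σ)) :
    sumPorts (l₁ ++ l₂) = sumPorts l₁ + sumPorts l₂ := by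
  simp [sumPorts]

theorem sumPorts_eq_zero {l : List (Term σ)} (hl : ∀ x ∈ l, x.ports = 0) : sumPorts l = 0 := by
  simpa [sumPorts, List.sum_eq_zero_iff] using hl

@[simp] theorem ports_port : (Term.port : Term σ).ports = 1 := by simp [ports]

@[simp] theorem ports_node (a : σ) (ts : List (Term σ)) :
    (Term.node a ts).ports = sumPorts ts := by
  rw [ports]; simp [sumPorts]

@[simp] theorem WF_port (ar : σ → ℕ) : (Term.port : Term σ).WF ar := by simp [WF]

theorem WF_node (ar : σ → ℕ) (a : σ) (ts : List (Term σ)) :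
    (Term.node a ts).WF ar ↔ ts.length = ar a ∧ ∀ t ∈ ts, t.WF ar := by
  rw [WF]; simp

mutual
theorem subst1_snd (t : Term σ) (l : List (Term σ)) :
    (subst1 t l).2 = l.drop t.ports := by
  match t with
  | .port => simp [subst1, List.drop_one]
  | .node a ts => simp [subst1, substL_snd ts l]
theorem substL_snd (ts l : List (Term σ)) :
    (substL ts l).2 = l.drop (sumPorts ts) := by
  match ts with
  | [] => simp [substL]
  | t :: ts' =>
    simp only [substL, subst1_snd t l, substL_snd ts' (l.drop t.ports), sumPorts_cons,
      List.drop_drop]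
end

theorem substL_fst_length (ts l : List (Term σ)) : (substL ts l).1.length = ts.length := by
  induction ts generalizing l with
  | nil => simp [substL]
  | cons t ts ih => simp [substL, ih]

theorem substL_append (l₁ l₂ m : List (Term σ)) :
    substL (l₁ ++ l₂) m
      = ((substL l₁ m).1 ++ (substL l₂ (substL l₁ m).2).1,
          (substL l₂ (substL l₁ m).2).2) := by
  induction l₁ generalizing m with
  | nil => simp [substL]
  | cons t l₁ ih => simp [substL, ih]

mutual
theorem subst1_take (t : Term σ) (l : List (Term σ)) :
    (subst1 t (l.take t.ports)).1 = (subst1 t l).1 := by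
  match t with
  | .port => cases l <;> simp [subst1]
  | .node a ts => simp [subst1, substL_take ts l]
theorem substL_take (ts l : List (Term σ)) :
    (substL ts (l.take (sumPorts ts))).1 = (substL ts l).1 := by
  match ts with
  | [] => simp [substL]
  | t :: ts' =>
    have hhead : (subst1 t (l.take (t.ports + sumPorts ts'))).1 = (subst1 t l).1 := by
      rw [← subst1_take t, List.take_take, Nat.min_eq_left (by omega), subst1_take]
    have htail : (subst1 t (l.take (t.ports + sumPorts ts'))).2
        = (l.drop t.ports).take (sumPorts ts') := by
      rw [subst1_snd, ← List.take_drop]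
    simp only [substL, sumPorts_cons, hhead, htail, subst1_snd, substL_take ts' (l.drop t.ports)]
end

mutual
theorem subst1_ports (t : Term σ) (l : List (Term σ)) (h : t.ports ≤ l.length) :
    (subst1 t l).1.ports = sumPorts (l.take t.ports) := by
  match t with
  | .port => cases l <;> simp_all [subst1]
  | .node a ts => simp_all [subst1, substL_ports ts l]
theorem substL_ports (ts l : List (Term σ)) (h : sumPorts ts ≤ l.length) :
    sumPorts (substL ts l).1 = sumPorts (l.take (sumPorts ts)) := by
  match ts with
  | [] => simp [substL]
  | t :: ts' =>
    simp only [sumPorts_cons] at h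
    simp only [substL, sumPorts_cons, subst1_ports t l (by omega), subst1_snd,
      substL_ports ts' (l.drop t.ports) (by simp; omega), List.take_add, sumPorts_append]
end

mutual
theorem subst1_WF {ar : σ → ℕ} (t : Term σ) (l : List (Term σ)) (ht : t.WF ar)
    (hl : ∀ x ∈ l, x.WF ar) : (subst1 t l).1.WF ar := by
  match t with
  | .port =>
    cases l with
    | nil => simp [subst1]
    | cons x l => exact hl x List.mem_cons_self
  | .node a ts =>
    rw [WF_node] at ht
    simp only [subst1, WF_node, substL_fst_length]
    exact ⟨ht.1, substL_WF ts l ht.2 hl⟩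
theorem substL_WF {ar : σ → ℕ} (ts l : List (Term σ)) (hts : ∀ x ∈ ts, x.WF ar)
    (hl : ∀ x ∈ l, x.WF ar) : ∀ x ∈ (substL ts l).1, x.WF ar := by
  match ts with
  | [] => simp [substL]
  | t :: ts' =>
    simp only [substL, List.mem_cons]
    rintro x (rfl | hx)
    · exact subst1_WF t l (hts t List.mem_cons_self) hl
    · refine substL_WF ts' _ (fun y hy => hts y (List.mem_cons_of_mem _ hy)) ?_ x hx
      rw [subst1_snd]
      exact fun y hy => hl y (List.mem_of_mem_drop hy)
end

mutual
theorem subst1_subst1 (t : Term σ) (l m : List (Term σ)) (h : t.ports ≤ l.length) :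
    (subst1 (subst1 t l).1 m).1 = (subst1 t (substL l m).1).1 := by
  match t with
  | .port =>
    match l with
    | [] => simp at h
    | x :: l' => simp [subst1, substL]
  | .node a ts =>
    simp only [subst1]
    rw [substL_substL ts l m (by simpa using h)]
theorem substL_substL (ts l m : List (Term σ)) (h : sumPorts ts ≤ l.length) :
    (substL (substL ts l).1 m).1 = (substL ts (substL l m).1).1 := by
  match ts with
  | [] => simp [substL]
  | t :: ts' =>
    simp only [sumPorts_cons] at h
    have hsplit : (substL l m).1 = (substL (l.take t.ports) m).1
        ++ (substL (l.drop t.ports) (m.drop (sumPorts (l.take t.ports)))).1 := by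
      conv_lhs => rw [← List.take_append_drop t.ports l]
      rw [substL_append, substL_snd]
    have hdrop : (substL l m).1.drop t.ports
        = (substL (l.drop t.ports) (m.drop (sumPorts (l.take t.ports)))).1 := by
      rw [hsplit, List.drop_left' (by rw [substL_fst_length, List.length_take]; omega)]
    simp only [substL, subst1_snd, subst1_subst1 t l m (by omega),
      subst1_ports t l (by omega)]
    rw [substL_substL ts' _ _ (by simp; omega), ← hdrop]
end

mutual
theorem subst1_nil (t : Term σ) : (subst1 t []).1 = t := by
  match t with
  | .port => rfl
  | .node a ts => simp only [subst1]; rw [substL_nil ts]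
theorem substL_nil (ts : List (Term σ)) : (substL ts []).1 = ts := by
  match ts with
  | [] => rfl
  | t :: ts' => simp only [substL, subst1_snd, List.drop_nil, subst1_nil t, substL_nil ts']
end

@[simp] theorem subst_nil (t : Term σ) : t.subst [] = t := subst1_nil t

@[simp] theorem port_subst_cons (x : Term σ) (l : List (Term σ)) :
    (Term.port : Term σ).subst (x :: l) = x := rfl

theorem subst_take (t : Term σ) (l : List (Term σ)) : t.subst (l.take t.ports) = t.subst l :=
  subst1_take t l

theorem subst_of_ports_eq_zero {t : Term σ} (h : t.ports = 0) (l : List (Term σ)) :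
    t.subst l = t := by
  rw [← subst_take, h, List.take_zero, subst_nil]

theorem ports_subst {t : Term σ} {l : List (Term σ)} (h : t.ports ≤ l.length) :
    (t.subst l).ports = sumPorts (l.take t.ports) :=
  subst1_ports t l h

theorem ports_subst_eq_zero {t : Term σ} {l : List (Term σ)} (h : t.ports ≤ l.length)
    (hl : ∀ x ∈ l, x.ports = 0) : (t.subst l).ports = 0 := by
  rw [ports_subst h, sumPorts_eq_zero fun x hx => hl x (List.mem_of_mem_take hx)]

theorem WF_subst {ar : σ → ℕ} {t : Term σ} {l : List (Term σ)} (ht : t.WF ar)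
    (hl : ∀ x ∈ l, x.WF ar) : (t.subst l).WF ar :=
  subst1_WF t l ht hl

theorem subst_subst {t : Term σ} {l : List (Term σ)} (h : t.ports ≤ l.length)
    (m : List (Term σ)) : (t.subst l).subst m = t.subst (substL l m).1 :=
  subst1_subst1 t l m h

theorem subst_pair_subst {t : Term σ} (ht : t.ports ≤ 2) (u v : Term σ) (l : List (Term σ)) :
    (t.subst [u, v]).subst l = t.subst [u.subst l, v.subst (l.drop u.ports)] := by
  rw [subst_subst (by simpa using ht)]
  simp [substL, subst1_snd, subst]

theorem subst_single_subst {s : Term σ} (hs : s.ports ≤ 1) (x : Term σ) (l : List (Term σ)) :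
    (s.subst [x]).subst l = s.subst [x.subst l] := by
  rw [subst_subst (by simpa using hs)]
  simp [substL, subst]

end Term

namespace Term

variable {σ : Type} {t : Term σ}

theorem ports_pair (ht : t.ports = 2) (u v : Term σ) :
    (t.subst [u, v]).ports = u.ports + v.ports := by
  rw [ports_subst (by simp [ht]), ht]; simp

theorem WF_pair {ar : σ → ℕ} (ht : t.WF ar) {u v : Term σ} (hu : u.WF ar) (hv : v.WF ar) :
    (t.subst [u, v]).WF ar :=
  WF_subst ht (by simp [hu, hv])

theorem closed_subst {ar : σ → ℕ} {w : Term σ} {l : List (Term σ)} (hw : w.WF ar)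
    (hlen : w.ports ≤ l.length) (hl : ∀ x ∈ l, x.ports = 0 ∧ x.WF ar) :
    (w.subst l).ports = 0 ∧ (w.subst l).WF ar :=
  ⟨ports_subst_eq_zero hlen fun x hx => (hl x hx).1, WF_subst hw fun x hx => (hl x hx).2⟩

theorem pair_port_left_subst (ht : t.ports = 2) (c x : Term σ) :
    (t.subst [.port, c]).subst [x] = t.subst [x, c] := by
  simp [subst_pair_subst ht.le]

theorem pair_port_right_subst (ht : t.ports = 2) {c : Term σ} (hc : c.ports = 0) (x : Term σ) :
    (t.subst [c, .port]).subst [x] = t.subst [c, x] := by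
  simp [subst_pair_subst ht.le, hc, subst_of_ports_eq_zero hc]

section Eval

variable {Q : Type} (δ : σ → List Q → Q) (q₀ : Q)

mutual
/-- Bottom-up run of a tree automaton in which the ports take their states, in order, from the
given list; returns the state at the root and the unused states. -/
def evalWith1 : Term σ → List Q → Q × List Q
  | .port, l => (l.headD q₀, l.tail)
  | .node a ts, l => let p := evalWithL ts l; (δ a p.1, p.2)
def evalWithL : List (Term σ) → List Q → List Q × List Q
  | [], l => ([], l)
  | t :: ts, l => let p := evalWith1 t l; let q := evalWithL ts p.2; (p.1 :: q.1, q.2)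
end

mutual
theorem eval_subst1 (u : Term σ) (l : List (Term σ)) :
    (eval δ q₀ (subst1 u l).1, (subst1 u l).2.map (eval δ q₀))
      = evalWith1 δ q₀ u (l.map (eval δ q₀)) := by
  match u with
  | .port => cases l <;> simp [subst1, evalWith1, eval]
  | .node a ts =>
    simp only [subst1, evalWith1, ← eval_substL ts l]
    rw [eval]
    simp
theorem eval_substL (ts l : List (Term σ)) :
    ((substL ts l).1.map (eval δ q₀), (substL ts l).2.map (eval δ q₀))
      = evalWithL δ q₀ ts (l.map (eval δ q₀)) := by
  match ts with
  | [] => simp [substL, evalWithL]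
  | u :: ts' =>
    simp only [substL, evalWithL, List.map_cons, ← eval_subst1 u l,
      ← eval_substL ts' (subst1 u l).2]
end

theorem eval_subst (w : Term σ) (l : List (Term σ)) :
    eval δ q₀ (w.subst l) = (evalWith1 δ q₀ w (l.map (eval δ q₀))).1 :=
  congrArg Prod.fst (eval_subst1 δ q₀ w l)

end Eval

end Term

namespace LEquiv

open Term

variable {σ : Type} {ar : σ → ℕ} {L : Set (Term σ)} {n : ℕ} {t u u' v v' : Term σ}

theorem refl (h : u.ports = n) : LEquiv ar L n u u :=
  ⟨h, h, fun _ _ _ _ _ _ => Iff.rfl⟩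

theorem symm (h : LEquiv ar L n u u') : LEquiv ar L n u' u :=
  ⟨h.2.1, h.1, fun s hs hsWF l hl hlc => (h.2.2 s hs hsWF l hl hlc).symm⟩

theorem trans (h₁ : LEquiv ar L n u v) (h₂ : LEquiv ar L n v v') : LEquiv ar L n u v' :=
  ⟨h₁.1, h₂.2.1, fun s hs hsWF l hl hlc =>
    (h₁.2.2 s hs hsWF l hl hlc).trans (h₂.2.2 s hs hsWF l hl hlc)⟩

theorem mem_iff_of_context (h : LEquiv ar L n u u') {s c : Term σ} (hs : s.ports = 1)
    (hsWF : s.WF ar) (hc : c.ports = 1) (hcWF : c.WF ar) {l : List (Term σ)}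
    (hl : l.length = n) (hlc : ∀ x ∈ l, x.ports = 0 ∧ x.WF ar) :
    s.subst [c.subst [u.subst l]] ∈ L ↔ s.subst [c.subst [u'.subst l]] ∈ L := by
  rw [← subst_single_subst hs.le, ← subst_single_subst hs.le]
  refine h.2.2 _ ?_ (WF_subst hsWF (by simp [hcWF])) l hl hlc
  rw [ports_subst (by simp [hs]), hs]
  simp [hc]

theorem pair_left (ht : t.ports = 2) (htWF : t.WF ar) (h : LEquiv ar L n u u')
    (hv : v.WF ar) : LEquiv ar L (n + v.ports) (t.subst [u, v]) (t.subst [u', v]) := by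
  refine ⟨by rw [ports_pair ht, h.1], by rw [ports_pair ht, h.2.1], ?_⟩
  intro s hs hsWF l hl hlc
  obtain ⟨hc, hcWF⟩ := closed_subst hv (l := l.drop n) (by simp; omega)
    fun x hx => hlc x (List.mem_of_mem_drop hx)
  -- the closed instance of `v` is absorbed into the context
  have hsplit : ∀ w : Term σ, w.ports = n → (t.subst [w, v]).subst l
      = (t.subst [.port, v.subst (l.drop n)]).subst [w.subst (l.take n)] := by
    intro w hw
    rw [pair_port_left_subst ht, subst_pair_subst ht.le, hw, ← hw, subst_take]
  rw [hsplit u h.1, hsplit u' h.2.1]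
  exact h.mem_iff_of_context hs hsWF (by simp [ports_pair ht, hc]) (WF_pair htWF (by simp) hcWF)
    (by simp; omega) fun x hx => hlc x (List.mem_of_mem_take hx)

theorem pair_right (ht : t.ports = 2) (htWF : t.WF ar) (hu : u.WF ar) (h : LEquiv ar L n v v') :
    LEquiv ar L (u.ports + n) (t.subst [u, v]) (t.subst [u, v']) := by
  refine ⟨by rw [ports_pair ht, h.1], by rw [ports_pair ht, h.2.1], ?_⟩
  intro s hs hsWF l hl hlc
  obtain ⟨hc, hcWF⟩ := closed_subst hu (l := l.take u.ports) (by simp; omega)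
    fun x hx => hlc x (List.mem_of_mem_take hx)
  have hsplit : ∀ w : Term σ, (t.subst [u, w]).subst l
      = (t.subst [u.subst (l.take u.ports), .port]).subst [w.subst (l.drop u.ports)] := by
    intro w
    rw [pair_port_right_subst ht hc, subst_pair_subst ht.le, subst_take]
  rw [hsplit v, hsplit v']
  exact h.mem_iff_of_context hs hsWF (by simp [ports_pair ht, hc]) (WF_pair htWF hcWF (by simp))
    (by simp; omega) fun x hx => hlc x (List.mem_of_mem_drop hx)

end LEquiv

section Rotation

open Term

variable {σ : Type} {ar : σ → ℕ} {L : Set (Term σ)} {t : Term σ}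

theorem LEquiv.rotate (hrot : LEquiv ar L 3 (t.subst [t, .port]) (t.subst [.port, t]))
    (ht : t.ports = 2) {X Y Z : Term σ} (hX : X.WF ar) (hY : Y.WF ar) (hZ : Z.WF ar) :
    LEquiv ar L (X.ports + Y.ports + Z.ports)
      (t.subst [t.subst [X, Y], Z]) (t.subst [X, t.subst [Y, Z]]) := by
  refine ⟨by simp [ports_pair ht], by simp [ports_pair ht]; omega, ?_⟩
  intro s hs hsWF l hl hlc
  set x := X.subst l
  set y := Y.subst (l.drop X.ports)
  set z := Z.subst (l.drop (X.ports + Y.ports))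
  have hleft : (t.subst [t.subst [X, Y], Z]).subst l = (t.subst [t, .port]).subst [x, y, z] := by
    rw [subst_pair_subst ht.le, subst_pair_subst ht.le, ports_pair ht, subst_pair_subst ht.le, ht,
      ← subst_take t [x, y, z], ht]
    simp [x, y, z]
  have hright : (t.subst [X, t.subst [Y, Z]]).subst l = (t.subst [.port, t]).subst [x, y, z] := by
    rw [subst_pair_subst ht.le, subst_pair_subst ht.le, subst_pair_subst ht.le, List.drop_drop]
    simp [x, y, z]
  have hdrop : ∀ k, ∀ w ∈ l.drop k, w.ports = 0 ∧ w.WF ar :=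
    fun k w hw => hlc w (List.mem_of_mem_drop hw)
  have hx := closed_subst hX (by omega) hlc
  have hy := closed_subst hY (by simp; omega) (hdrop X.ports)
  have hz := closed_subst hZ (by simp; omega) (hdrop (X.ports + Y.ports))
  rw [hleft, hright]
  exact hrot.2.2 s hs hsWF [x, y, z] rfl (by simpa using ⟨hx, hy, hz⟩)

end Rotation

section Comb

open Term

variable {σ : Type} {ar : σ → ℕ} {L : Set (Term σ)} {t u : Term σ}

/-- `leftComb t n = t(⋯t(t(*, *), *)⋯, *)`, with `n` occurrences of `t` and `n + 1` ports. -/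
def leftComb (t : Term σ) : ℕ → Term σ
  | 0 => .port
  | n + 1 => t.subst [leftComb t n, .port]

theorem ports_leftComb (ht : t.ports = 2) (n : ℕ) : (leftComb t n).ports = n + 1 := by
  induction n with
  | zero => simp [leftComb]
  | succ n ih => simp [leftComb, ports_pair ht, ih]

theorem WF_leftComb (ht : t.WF ar) (n : ℕ) : (leftComb t n).WF ar := by
  induction n with
  | zero => simp [leftComb]
  | succ n ih => exact WF_pair ht ih (WF_port ar)

theorem lequiv_pair_leftComb (hrot : LEquiv ar L 3 (t.subst [t, .port]) (t.subst [.port, t]))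
    (ht : t.ports = 2) (htWF : t.WF ar) (p q : ℕ) :
    LEquiv ar L (p + q + 2) (t.subst [leftComb t p, leftComb t q]) (leftComb t (p + q + 1)) := by
  induction q with
  | zero => exact .refl (by simp [leftComb, ports_pair ht, ports_leftComb ht])
  | succ q ih =>
    have hreassoc := (LEquiv.rotate hrot ht (WF_leftComb htWF p) (WF_leftComb htWF q)
      (WF_port ar)).symm
    have hmerge := ih.pair_left ht htWF (WF_port ar)
    simp only [ports_leftComb ht, ports_port, show p + 1 + (q + 1) + 1 = p + q + 2 + 1 by omega]
      at hreassoc hmerge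
    exact hreassoc.trans hmerge

theorem TStar.WF (ht : t.WF ar) (h : TStar t u) : u.WF ar := by
  induction h with
  | base => exact WF_port ar
  | step _ _ ihu ihv => exact WF_pair ht ihu ihv

theorem TStar.ports_pos (ht : t.ports = 2) (h : TStar t u) : 0 < u.ports := by
  induction h with
  | base => simp
  | step _ _ ihu ihv => rw [ports_pair ht]; omega

theorem TStar.lequiv_leftComb (hrot : LEquiv ar L 3 (t.subst [t, .port]) (t.subst [.port, t]))
    (ht : t.ports = 2) (htWF : t.WF ar) (h : TStar t u) {n : ℕ} (hn : u.ports = n + 1) :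
    LEquiv ar L (n + 1) u (leftComb t n) := by
  induction h generalizing n with
  | base => simp_all [leftComb, LEquiv.refl]
  | @step u v hu hv ihu ihv =>
    obtain ⟨p, hp⟩ := Nat.exists_eq_add_one.mpr (hu.ports_pos ht)
    obtain ⟨q, hq⟩ := Nat.exists_eq_add_one.mpr (hv.ports_pos ht)
    rw [ports_pair ht, hp, hq] at hn
    have hleft := (ihu hp).pair_left ht htWF (hv.WF htWF)
    have hright := (ihv hq).pair_right ht htWF (WF_leftComb htWF p)
    rw [hq] at hleft
    rw [ports_leftComb ht] at hright
    rw [show p + 1 + (q + 1) = p + q + 2 by omega] at hleft hright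
    have hcomb := lequiv_pair_leftComb hrot ht htWF p q
    rw [show n = p + q + 1 by omega]
    exact hleft.trans (hright.trans hcomb)

end Comb

open Term

section Kop

variable {Γ N : Type} {t : Term (KLetter Γ)}

@[simp] theorem ports_leafT (g : Γ) : (leafT g).ports = 0 := by simp [leafT]

theorem WF_leafT (g : Γ) : (leafT g).WF arK := by simp [leafT, WF_node, arK]

namespace DTree

theorem yield_ne_nil : ∀ d : DTree Γ N, d.yield ≠ []
  | .leaf _ => by simp [yield]
  | .node _ l _ => by simp [yield, yield_ne_nil l]

def kopTerm (t : Term (KLetter Γ)) : DTree Γ N → Term (KLetter Γ)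
  | .leaf g => leafT g
  | .node _ l r => t.subst [kopTerm t l, kopTerm t r]

def shape (t : Term (KLetter Γ)) : DTree Γ N → Term (KLetter Γ)
  | .leaf _ => .port
  | .node _ l r => t.subst [shape t l, shape t r]

theorem kopD_kopTerm (ht : t.ports = 2) (htWF : t.WF arK) (htAC : OnlyAC t) :
    ∀ d : DTree Γ N, KopD d (d.kopTerm t)
  | .leaf g => .leaf g
  | .node A l r => .node A l r t _ _ ht htWF htAC (kopD_kopTerm ht htWF htAC l)
      (kopD_kopTerm ht htWF htAC r)

theorem tStar_shape : ∀ d : DTree Γ N, TStar t (d.shape t)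
  | .leaf _ => .base
  | .node _ l r => .step (tStar_shape l) (tStar_shape r)

theorem ports_shape (ht : t.ports = 2) : ∀ d : DTree Γ N, (d.shape t).ports = d.yield.length
  | .leaf _ => by simp [shape, yield]
  | .node _ l r => by simp [shape, yield, ports_pair ht, ports_shape ht l, ports_shape ht r]

theorem kopTerm_eq_shape_subst (ht : t.ports = 2) :
    ∀ d : DTree Γ N, d.kopTerm t = (d.shape t).subst (d.yield.map leafT)
  | .leaf g => by simp [kopTerm, shape, yield]
  | .node _ l r => by
    have hl : (l.yield.map leafT).length = (l.shape t).ports := by simp [ports_shape ht]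
    rw [kopTerm, shape, yield, subst_pair_subst ht.le, List.map_append, ← subst_take (shape t l),
      List.take_left' hl, List.drop_left' hl, ← kopTerm_eq_shape_subst ht l,
      ← kopTerm_eq_shape_subst ht r]

end DTree

/-- The paper's `comb_t(a₁, …, aₙ)`; for the empty word it is a bare port. -/
def combWord (t : Term (KLetter Γ)) (w : List Γ) : Term (KLetter Γ) :=
  (leftComb t (w.length - 1)).subst (w.map leafT)

theorem combWord_append_singleton (ht : t.ports = 2) {w : List Γ} (hw : w ≠ []) (g : Γ) :
    combWord t (w ++ [g]) = t.subst [combWord t w, leafT g] := by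
  obtain ⟨n, hn⟩ := Nat.exists_eq_add_one.mpr (List.length_pos_iff.mpr hw)
  have hlen : (w.map leafT).length = (leftComb t n).ports := by simp [ports_leftComb ht, hn]
  rw [combWord, combWord, List.length_append, hn, List.length_singleton, Nat.add_sub_cancel,
    Nat.add_sub_cancel, leftComb, subst_pair_subst ht.le, List.map_append,
    ← subst_take (leftComb t n), List.take_left' hlen, List.drop_left' hlen]
  simp

theorem closed_combWord (ht : t.ports = 2) (htWF : t.WF arK) {w : List Γ} (hw : w ≠ []) :
    (combWord t w).ports = 0 ∧ (combWord t w).WF arK := by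
  refine closed_subst (WF_leftComb htWF _) ?_ (by simp [WF_leafT])
  have := List.length_pos_iff.mpr hw
  simp [ports_leftComb ht]
  omega

theorem DTree.combWord_yield_mem_iff {L : Set (Term (KLetter Γ))}
    (hrot : LEquiv arK L 3 (t.subst [t, .port]) (t.subst [.port, t])) (ht : t.ports = 2)
    (htWF : t.WF arK) (d : DTree Γ N) : combWord t d.yield ∈ L ↔ d.kopTerm t ∈ L := by
  obtain ⟨n, hn⟩ := Nat.exists_eq_add_one.mpr (List.length_pos_iff.mpr d.yield_ne_nil)
  have hshape := d.tStar_shape.lequiv_leftComb hrot ht htWF (n := n) (by rw [ports_shape ht, hn])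
  have := hshape.2.2 .port (ports_port) (WF_port arK) (d.yield.map leafT) (by simp [hn])
    (by simp [WF_leafT])
  rw [kopTerm_eq_shape_subst ht, combWord, hn, Nat.add_sub_cancel]
  exact this.symm

end Kop

section CombAutomaton

variable {Γ Q : Type} (δ : KLetter Γ → List Q → Q) (q₀ : Q) (F : Set Q)
  (t : Term (KLetter Γ))

def combDFA : DFA Γ (Option Q) where
  step
    | none, g => some (eval δ q₀ (leafT g))
    | some q, g => some (evalWith1 δ q₀ t [q, eval δ q₀ (leafT g)]).1
  start := none
  accept := some '' F

variable {δ q₀ F t}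

theorem combDFA_eval (ht : t.ports = 2) {w : List Γ} (hw : w ≠ []) :
    (combDFA δ q₀ F t).eval w = some (eval δ q₀ (combWord t w)) := by
  induction w using List.reverseRecOn with
  | nil => exact absurd rfl hw
  | append_singleton w g ih =>
    rcases eq_or_ne w [] with rfl | hw'
    · rfl
    · rw [DFA.eval_append_singleton, ih hw', combWord_append_singleton ht hw', eval_subst]
      rfl

theorem RegularTree.regularWord_combWord_preimage {L : Set (Term (KLetter Γ))}
    (hL : RegularTree arK L) (ht : t.ports = 2) (htWF : t.WF arK) :
    RegularWord {w | combWord t w ∈ L} := by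
  obtain ⟨Q, hQ, δ, q₀, F, rfl⟩ := hL
  have := Fintype.ofFinite Q
  refine ⟨Option Q, inferInstance, combDFA δ q₀ F t, Set.ext fun w => ?_⟩
  change combWord t w ∈ {u | u.ports = 0 ∧ u.WF arK ∧ eval δ q₀ u ∈ F} ↔
    (combDFA δ q₀ F t).eval w ∈ some '' F
  rcases eq_or_ne w [] with rfl | hw
  · simp [combWord, leftComb, combDFA]
  · simp [combDFA_eval ht hw, closed_combWord ht htWF hw]

end CombAutomaton

/-- Assuming the Rotation Lemma for a class `Walk` of tree languages (those recognized by
deterministic tree-walking automata) and that every such language is regular: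
if `kop(G)` and `kop(H)` can be separated by a language in `Walk`, then `L(G)` and `L(H)`
can be separated by a regular word language. -/
theorem word_separation_of_kop_separation {Γ N M : Type} (G : CNF Γ N) (H : CNF Γ M)
    (Walk : Set (Term (KLetter Γ)) → Prop)
    (hrot : ∀ L : Set (Term (KLetter Γ)), Walk L →
      ∃ t : Term (KLetter Γ), OnlyAC t ∧ t.ports = 2 ∧ t.WF arK ∧
        LEquiv arK L 3 (t.subst [t, Term.port]) (t.subst [Term.port, t]))
    (hreg : ∀ L : Set (Term (KLetter Γ)), Walk L → RegularTree arK L)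
    (hsep : ∃ L : Set (Term (KLetter Γ)), Walk L ∧ kopLang G ⊆ L ∧ L ∩ kopLang H = ∅) :
    ∃ K : Set (List Γ), RegularWord K ∧ G.lang ⊆ K ∧ K ∩ H.lang = ∅ := by
  obtain ⟨L, hWalk, hGL, hLH⟩ := hsep
  obtain ⟨t, htAC, ht, htWF, hrotL⟩ := hrot L hWalk
  refine ⟨_, (hreg L hWalk).regularWord_combWord_preimage ht htWF, ?_, ?_⟩
  · rintro _ ⟨d, hd, rfl⟩
    exact (d.combWord_yield_mem_iff hrotL ht htWF).2 (hGL ⟨d, hd, d.kopD_kopTerm ht htWF htAC⟩)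
  · refine Set.eq_empty_of_forall_notMem ?_
    rintro _ ⟨hw, d, hd, rfl⟩
    exact hLH.subset ⟨(d.combWord_yield_mem_iff hrotL ht htWF).1 hw, d, hd,
      d.kopD_kopTerm ht htWF htAC⟩
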